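/- Theorem 6 (convergence to the true distribution, identifiability form): let c_i > 0 for all i ∈ ι with Σ_i c_i = 1. Let p* be a positive distribution, (p_N) a sequence of positive distributions with p_N(x) → p*(x) for every x, and (q_N) a sequence of positive distributions with FC(p_N‖q_N) → 0. Then q_N(x) → p*(x) for every x ∈ X. -/

import Mathlib

open Finset

variable {ι : Type} [Fintype ι] [DecidableEq ι] [Nonempty ι]
  {α : ι → Type} [∀ i, Fintype (α i)] [∀ i, DecidableEq (α i)] [∀ i, Nonempty (α i)]

/-- `p` is a probability distribution on the joint space `X = Π j, α j`. -/
def IsDist (p : (∀ j, α j) → ℝ) : Prop :=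
  (∀ x, 0 ≤ p x) ∧ ∑ x, p x = 1

/-- The `i`-marginal `p₋ᵢ(x) = Σ_{a ∈ α i} p(x[i↦a])`. -/
noncomputable def marg (p : (∀ j, α j) → ℝ) (i : ι) (x : ∀ j, α j) : ℝ :=
  ∑ a, p (Function.update x i a)

/-- The full conditional `p(xᵢ|x₋ᵢ) = p(x)/p₋ᵢ(x)`. -/
noncomputable def fullCond (p : (∀ j, α j) → ℝ) (i : ι) (x : ∀ j, α j) : ℝ :=
  p x / marg p i x

/-- `θ` is a conditional probability table (CPT) at node `i`. -/
def IsCPT (i : ι) (θ : α i → (∀ j, α j) → ℝ) : Prop :=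
  (∀ a x, 0 < θ a x) ∧ (∀ x, ∑ a, θ a x = 1) ∧
  (∀ a x (b : α i), θ a (Function.update x i b) = θ a x)

/-- `q` belongs to the full-conditional manifold `E(θ)`. -/
def memE (i : ι) (θ : α i → (∀ j, α j) → ℝ) (q : (∀ j, α j) → ℝ) : Prop :=
  ∀ x, q x = marg q i x * θ (x i) x

/-- Kullback–Leibler divergence. -/
noncomputable def KL (p q : (∀ j, α j) → ℝ) : ℝ :=
  ∑ x, p x * Real.log (p x / q x)

/-- The full-conditional divergence
`FC(p‖q) = Σ_i c_i·Σ_x p(x)·log( p(xᵢ|x₋ᵢ)/q(xᵢ|x₋ᵢ) )`. -/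
noncomputable def FC (c : ι → ℝ) (p q : (∀ j, α j) → ℝ) : ℝ :=
  ∑ i, c i * ∑ x, p x * Real.log (fullCond p i x / fullCond q i x)

/-!
Each summand of `FC(p‖q)` is the Kullback–Leibler divergence of `p` from `mixCond p q i`, the
distribution with the `i`-marginal of `p` and the `i`-conditional of `q`. KL dominates the squared
Hellinger distance, so `FC(p_N‖q_N) → 0` forces `mixCond (p N) (q N) i → p*` pointwise, and hence
the full conditionals of `q_N` converge to those of `p*`. A ratio `q(x) / q(x[i↦a])` is a ratio of
full conditionals and any two points are joined by single-coordinate changes, so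
`q_N(x) / q_N(y) → p*(x) / p*(y)` for all `x, y`; normalisation then gives `q_N(y) → p*(y)`.
-/

theorem sq_sqrt_sub_sqrt_le {u v : ℝ} (hu : 0 < u) (hv : 0 < v) :
    (√u - √v) ^ 2 ≤ u * Real.log (u / v) - u + v := by
  have hs := Real.sqrt_pos.mpr hu
  have ht := Real.sqrt_pos.mpr hv
  have hlog : Real.log (u / v) = 2 * Real.log (√u / √v) := by
    have hsq : u / v = (√u / √v) ^ 2 := by rw [div_pow, Real.sq_sqrt hu.le, Real.sq_sqrt hv.le]
    rw [hsq, Real.log_pow]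
    norm_num
  have hlog_ge : 1 - √v / √u ≤ Real.log (√u / √v) := by
    simpa using Real.one_sub_inv_le_log_of_pos (div_pos hs ht)
  have key : 2 * u - 2 * √u * √v ≤ u * Real.log (u / v) := by
    calc 2 * u - 2 * √u * √v = 2 * u * (1 - √v / √u) := by
          field_simp
          linear_combination (-√v) * Real.sq_sqrt hu.le
      _ ≤ u * Real.log (u / v) := by rw [hlog]; nlinarith
  nlinarith [Real.sq_sqrt hu.le, Real.sq_sqrt hv.le]

theorem Pi.rel_of_rel_update {ι : Type*} [Fintype ι] [DecidableEq ι] {α : ι → Type*}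
    {R : (∀ j, α j) → (∀ j, α j) → Prop} (hrefl : ∀ x, R x x)
    (htrans : ∀ x y z, R x y → R y z → R x z)
    (hupdate : ∀ x i b, R x (Function.update x i b)) (x y : ∀ j, α j) : R x y := by
  suffices ∀ s : Finset ι, ∀ x, (∀ j ∉ s, x j = y j) → R x y from this univ x (by simp)
  intro s
  induction s using Finset.induction_on with
  | empty =>
    intro x hxy
    rw [funext fun j => hxy j (notMem_empty j)]
    exact hrefl y
  | insert i s _ ih =>
    intro x hxy
    refine htrans _ _ _ (hupdate x i (y i)) (ih _ fun j hj => ?_)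
    by_cases hji : j = i
    · subst hji
      exact Function.update_self ..
    · rw [Function.update_of_ne hji]
      exact hxy j (by simp [hji, hj])

section FullConditionals

variable {ι : Type} [DecidableEq ι] {α : ι → Type} [∀ i, Fintype (α i)]

theorem marg_pos {p : (∀ j, α j) → ℝ} (hp : ∀ x, 0 < p x) (i : ι) (x : ∀ j, α j) :
    0 < marg p i x :=
  sum_pos (fun _ _ => hp _) ⟨x i, mem_univ _⟩

theorem fullCond_pos {p : (∀ j, α j) → ℝ} (hp : ∀ x, 0 < p x) (i : ι) (x : ∀ j, α j) :
    0 < fullCond p i x :=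
  div_pos (hp x) (marg_pos hp i x)

theorem marg_update (p : (∀ j, α j) → ℝ) (i : ι) (x : ∀ j, α j) (b : α i) :
    marg p i (Function.update x i b) = marg p i x := by
  simp only [marg, Function.update_idem]

theorem marg_fullCond (q : (∀ j, α j) → ℝ) (hq : ∀ x, 0 < q x) (i : ι) (x : ∀ j, α j) :
    marg (fullCond q i) i x = 1 := by
  rw [marg]
  simp only [fullCond, marg_update]
  rw [← sum_div]
  exact div_self (marg_pos hq i x).ne'

theorem div_fullCond_update (q : (∀ j, α j) → ℝ) (i : ι) (x : ∀ j, α j) (b : α i)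
    (hq : marg q i x ≠ 0) :
    fullCond q i x / fullCond q i (Function.update x i b) = q x / q (Function.update x i b) := by
  rw [fullCond, fullCond, marg_update, div_div_div_cancel_right₀ hq]

def swapCoord (i : ι) : Equiv.Perm ((∀ j, α j) × α i) :=
  Function.Involutive.toPerm (fun xa => (Function.update xa.1 i xa.2, xa.1 i)) fun xa => by
    simp

theorem sum_marg_mul [Fintype ι] (f g : (∀ j, α j) → ℝ) (i : ι) :
    ∑ x, marg f i x * g x = ∑ x, f x * marg g i x := by
  simp only [marg, sum_mul, mul_sum, ← Fintype.sum_prod_type']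
  exact Fintype.sum_equiv (swapCoord i) _ _ fun xa => by simp [swapCoord, Function.Involutive.toPerm]

noncomputable def mixCond (p q : (∀ j, α j) → ℝ) (i : ι) (x : ∀ j, α j) : ℝ :=
  marg p i x * fullCond q i x

theorem mixCond_pos {p q : (∀ j, α j) → ℝ} (hp : ∀ x, 0 < p x) (hq : ∀ x, 0 < q x) (i : ι)
    (x : ∀ j, α j) : 0 < mixCond p q i x :=
  mul_pos (marg_pos hp i x) (fullCond_pos hq i x)

theorem sq_sqrt_sub_sqrt_mixCond_le (p : (∀ j, α j) → ℝ) {q : (∀ j, α j) → ℝ} (hp : ∀ x, 0 < p x)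
    (hq : ∀ x, 0 < q x) (i : ι) (x : ∀ j, α j) :
    (√(p x) - √(mixCond p q i x)) ^ 2
      ≤ p x * Real.log (p x / mixCond p q i x) - p x + mixCond p q i x :=
  sq_sqrt_sub_sqrt_le (hp x) (mixCond_pos hp hq i x)

variable [Fintype ι]

noncomputable def condDiv (i : ι) (p q : (∀ j, α j) → ℝ) : ℝ :=
  ∑ x, p x * Real.log (fullCond p i x / fullCond q i x)

theorem sum_mixCond (p : (∀ j, α j) → ℝ) {q : (∀ j, α j) → ℝ} (hq : ∀ x, 0 < q x) (i : ι) :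
    ∑ x, mixCond p q i x = ∑ x, p x := by
  simp only [mixCond, sum_marg_mul, marg_fullCond q hq, mul_one]

theorem condDiv_eq_sum (p : (∀ j, α j) → ℝ) {q : (∀ j, α j) → ℝ} (hq : ∀ x, 0 < q x) (i : ι) :
    condDiv i p q = ∑ x, (p x * Real.log (p x / mixCond p q i x) - p x + mixCond p q i x) := by
  rw [sum_add_distrib, sum_sub_distrib, sum_mixCond p hq, sub_add_cancel]
  simp only [condDiv, mixCond, fullCond, div_div]

theorem condDiv_nonneg {p q : (∀ j, α j) → ℝ} (hp : ∀ x, 0 < p x) (hq : ∀ x, 0 < q x)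
    (i : ι) : 0 ≤ condDiv i p q := by
  rw [condDiv_eq_sum p hq]
  exact sum_nonneg fun x _ => (sq_nonneg _).trans (sq_sqrt_sub_sqrt_mixCond_le p hp hq i x)

theorem sq_sqrt_sub_sqrt_mixCond_le_condDiv {p q : (∀ j, α j) → ℝ} (hp : ∀ x, 0 < p x)
    (hq : ∀ x, 0 < q x) (i : ι) (x : ∀ j, α j) :
    (√(p x) - √(mixCond p q i x)) ^ 2 ≤ condDiv i p q := by
  rw [condDiv_eq_sum p hq]
  refine (sq_sqrt_sub_sqrt_mixCond_le p hp hq i x).trans (single_le_sum (f := fun x =>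
    p x * Real.log (p x / mixCond p q i x) - p x + mixCond p q i x) (fun y _ => ?_) (mem_univ x))
  exact (sq_nonneg _).trans (sq_sqrt_sub_sqrt_mixCond_le p hp hq i y)

end FullConditionals

section Limits

open Filter Topology

variable {γ : Type*} {l : Filter γ}

theorem tendsto_of_tendsto_sqrt_sub_sq_zero {f g : γ → ℝ} {a : ℝ} (ha : 0 ≤ a)
    (hf : Tendsto f l (𝓝 a)) (hg : ∀ n, 0 ≤ g n)
    (h : Tendsto (fun n => (√(f n) - √(g n)) ^ 2) l (𝓝 0)) : Tendsto g l (𝓝 a) := by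
  have hdiff : Tendsto (fun n => √(f n) - √(g n)) l (𝓝 0) := by
    rw [tendsto_zero_iff_abs_tendsto_zero]
    simpa [Function.comp_def, Real.sqrt_sq_eq_abs] using h.sqrt
  have hsqrt : Tendsto (fun n => √(g n)) l (𝓝 √a) := by
    simpa using hf.sqrt.sub hdiff
  simpa [Real.sq_sqrt, hg, ha] using hsqrt.pow 2

theorem tendsto_zero_of_tendsto_weighted_sum_zero {κ : Type*} [Fintype κ] {c : κ → ℝ}
    {f : κ → γ → ℝ} (hc : ∀ i, 0 < c i) (hf : ∀ i n, 0 ≤ f i n)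
    (h : Tendsto (fun n => ∑ i, c i * f i n) l (𝓝 0)) (i : κ) : Tendsto (f i) l (𝓝 0) := by
  refine squeeze_zero (hf i) (fun n => ?_) (by simpa using h.const_mul (c i)⁻¹)
  rw [le_inv_mul_iff₀ (hc i)]
  exact single_le_sum (f := fun j => c j * f j n)
    (fun j _ => mul_nonneg (hc j).le (hf j n)) (mem_univ i)

theorem tendsto_of_tendsto_div {β : Type*} [Fintype β] {P : γ → β → ℝ} {P' : β → ℝ}
    (hP : ∀ n, ∑ x, P n x = 1) (hP' : ∑ x, P' x = 1) {y : β} (hy : P' y ≠ 0)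
    (h : ∀ x, Tendsto (fun n => P n x / P n y) l (𝓝 (P' x / P' y))) :
    Tendsto (fun n => P n y) l (𝓝 (P' y)) := by
  have hinv : ∀ Q : β → ℝ, ∑ x, Q x = 1 → (∑ x, Q x / Q y)⁻¹ = Q y := fun Q hQ => by
    rw [← sum_div, hQ, one_div, inv_inv]
  have hsum := (tendsto_finsetSum univ fun x _ => h x).inv₀ (by
    rw [← sum_div, hP', one_div]; exact inv_ne_zero hy)
  simpa only [hinv _ (hP _), hinv P' hP'] using hsum

end Limits

section Convergence

open Filter Topology

variable {ι : Type} [Fintype ι] [DecidableEq ι] {α : ι → Type} [∀ i, Fintype (α i)]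
  {γ : Type*} {l : Filter γ} {p q : γ → (∀ j, α j) → ℝ} {pstar : (∀ j, α j) → ℝ}

theorem tendsto_fullCond_of_tendsto_condDiv (hppos : ∀ n x, 0 < p n x)
    (hqpos : ∀ n x, 0 < q n x) (hpstarpos : ∀ x, 0 < pstar x)
    (hplim : ∀ x, Tendsto (fun n => p n x) l (𝓝 (pstar x))) {i : ι}
    (hdiv : Tendsto (fun n => condDiv i (p n) (q n)) l (𝓝 0)) (x : ∀ j, α j) :
    Tendsto (fun n => fullCond (q n) i x) l (𝓝 (fullCond pstar i x)) := by
  have hmix : Tendsto (fun n => mixCond (p n) (q n) i x) l (𝓝 (pstar x)) :=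
    tendsto_of_tendsto_sqrt_sub_sq_zero (hpstarpos x).le (hplim x)
      (fun n => (mixCond_pos (hppos n) (hqpos n) i x).le)
      (squeeze_zero (fun n => sq_nonneg _)
        (fun n => sq_sqrt_sub_sqrt_mixCond_le_condDiv (hppos n) (hqpos n) i x) hdiv)
  have hmarg : Tendsto (fun n => marg (p n) i x) l (𝓝 (marg pstar i x)) :=
    tendsto_finsetSum _ fun a _ => hplim _
  exact (hmix.div hmarg (marg_pos hpstarpos i x).ne').congr fun n =>
    mul_div_cancel_left₀ _ (marg_pos (hppos n) i x).ne'

theorem tendsto_div_of_tendsto_fullCond (hqpos : ∀ n x, 0 < q n x)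
    (hpstarpos : ∀ x, 0 < pstar x)
    (h : ∀ i x, Tendsto (fun n => fullCond (q n) i x) l (𝓝 (fullCond pstar i x)))
    (x y : ∀ j, α j) : Tendsto (fun n => q n x / q n y) l (𝓝 (pstar x / pstar y)) := by
  refine Pi.rel_of_rel_update (R := fun x y => Tendsto (fun n => q n x / q n y) l
    (𝓝 (pstar x / pstar y))) (fun x => ?_) (fun x y z hxy hyz => ?_) (fun x i b => ?_) x y
  · simp only [div_self (hqpos _ x).ne', div_self (hpstarpos x).ne']
    exact tendsto_const_nhds
  · rw [← div_mul_div_cancel₀ (hpstarpos y).ne']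
    exact (hxy.mul hyz).congr fun n => div_mul_div_cancel₀ (hqpos n y).ne'
  · have hratio := (h i x).div (h i (Function.update x i b)) (fullCond_pos hpstarpos i _).ne'
    rw [div_fullCond_update pstar i x b (marg_pos hpstarpos i x).ne'] at hratio
    exact hratio.congr fun n => div_fullCond_update _ i x b (marg_pos (hqpos n) i x).ne'

end Convergence

theorem convergence_to_true_distribution_general
    (c : ι → ℝ) (hc0 : ∀ i, 0 < c i)
    (pstar : (∀ j, α j) → ℝ) (hpstar : IsDist pstar) (hpstarpos : ∀ x, 0 < pstar x)
    (p : ℕ → (∀ j, α j) → ℝ) (hppos : ∀ N x, 0 < p N x)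
    (q : ℕ → (∀ j, α j) → ℝ) (hq : ∀ N, IsDist (q N)) (hqpos : ∀ N x, 0 < q N x)
    (hplim : ∀ x, Filter.Tendsto (fun N => p N x) Filter.atTop (nhds (pstar x)))
    (hFClim : Filter.Tendsto (fun N => FC c (p N) (q N)) Filter.atTop (nhds 0)) :
    ∀ x, Filter.Tendsto (fun N => q N x) Filter.atTop (nhds (pstar x)) := by
  intro y
  have hdiv : ∀ i, Filter.Tendsto (fun N => condDiv i (p N) (q N)) Filter.atTop (nhds 0) :=
    tendsto_zero_of_tendsto_weighted_sum_zero (f := fun i N => condDiv i (p N) (q N)) hc0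
      (fun i N => condDiv_nonneg (hppos N) (hqpos N) i) hFClim
  have hfull i x := tendsto_fullCond_of_tendsto_condDiv hppos hqpos hpstarpos hplim (hdiv i) x
  exact tendsto_of_tendsto_div (fun N => (hq N).2) hpstar.2 (hpstarpos y).ne' fun x =>
    tendsto_div_of_tendsto_fullCond hqpos hpstarpos hfull x y

/-- Theorem 6, identifiability form: if `p_N → p*` pointwise and
`FC(p_N‖q_N) → 0` with all weights positive, then `q_N → p*` pointwise. -/
theorem convergence_to_true_distribution
    (c : ι → ℝ) (hc0 : ∀ i, 0 < c i) (hc1 : ∑ i, c i = 1)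
    (pstar : (∀ j, α j) → ℝ) (hpstar : IsDist pstar) (hpstarpos : ∀ x, 0 < pstar x)
    (p : ℕ → (∀ j, α j) → ℝ) (hp : ∀ N, IsDist (p N)) (hppos : ∀ N x, 0 < p N x)
    (q : ℕ → (∀ j, α j) → ℝ) (hq : ∀ N, IsDist (q N)) (hqpos : ∀ N x, 0 < q N x)
    (hplim : ∀ x, Filter.Tendsto (fun N => p N x) Filter.atTop (nhds (pstar x)))
    (hFClim : Filter.Tendsto (fun N => FC c (p N) (q N)) Filter.atTop (nhds 0)) :
    ∀ x, Filter.Tendsto (fun N => q N x) Filter.atTop (nhds (pstar x)) :=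
  convergence_to_true_distribution_general c hc0 pstar hpstar hpstarpos p hppos q hq hqpos hplim
    hFClim
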